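/- Let Σ₁, Σ₂ be systems in driving variable form with the same external space W and let V∘,* be the consistent subspace of Σ₁ ∘ Σ₂. Then the subspace S = {((x₁∘, x₂∘), x₁) : x₁∘ = x₁ and (x₁∘, x₂∘) ∈ V∘,*} ⊆ (X₁ × X₂) × X₁ is a full simulation relation of Σ₁ ∘ Σ₂ by Σ₁; in particular π_{X₁×X₂}(S) = V∘,* and π_{X₁}(S) ⊆ V₁*. -/

import Mathlib

/-- A linear system in driving variable form `ẋ = A x + G d`, `w = C x`, `0 = H x`. -/
structure DVSystem (X W D Y : Type)
    [AddCommGroup X] [Module ℝ X] [AddCommGroup W] [Module ℝ W]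
    [AddCommGroup D] [Module ℝ D] [AddCommGroup Y] [Module ℝ Y] where
  A : X →ₗ[ℝ] X
  G : D →ₗ[ℝ] X
  C : X →ₗ[ℝ] W
  H : X →ₗ[ℝ] Y

namespace DVSystem

section basic

variable {X W D Y : Type}
  [AddCommGroup X] [Module ℝ X] [AddCommGroup W] [Module ℝ W]
  [AddCommGroup D] [Module ℝ D] [AddCommGroup Y] [Module ℝ Y]

/-- A subspace `U` is consistent-admissible if `A U ⊆ U + im G` and `U ⊆ ker H`. -/
def Admissible (P : DVSystem X W D Y) (U : Submodule ℝ X) : Prop :=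
  U.map P.A ≤ U ⊔ LinearMap.range P.G ∧ U ≤ LinearMap.ker P.H

/-- The consistent subspace `V*`: the largest consistent-admissible subspace. -/
def V (P : DVSystem X W D Y) : Submodule ℝ X :=
  sSup {U | P.Admissible U}

end basic

section sim

variable {W : Type} [AddCommGroup W] [Module ℝ W]
variable {X₁ D₁ Y₁ : Type} [AddCommGroup X₁] [Module ℝ X₁]
  [AddCommGroup D₁] [Module ℝ D₁] [AddCommGroup Y₁] [Module ℝ Y₁]
variable {X₂ D₂ Y₂ : Type} [AddCommGroup X₂] [Module ℝ X₂]
  [AddCommGroup D₂] [Module ℝ D₂] [AddCommGroup Y₂] [Module ℝ Y₂]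

/-- Items (i)-(ii) of the (algebraic) definition of a simulation relation. -/
def SimConds (P₁ : DVSystem X₁ W D₁ Y₁) (P₂ : DVSystem X₂ W D₂ Y₂)
    (S : Submodule ℝ (X₁ × X₂)) : Prop :=
  ∀ x₁ x₂, (x₁, x₂) ∈ S →
    (∀ d₁ : D₁, P₁.A x₁ + P₁.G d₁ ∈ P₁.V →
      ∃ d₂ : D₂, P₂.A x₂ + P₂.G d₂ ∈ P₂.V ∧
        (P₁.A x₁ + P₁.G d₁, P₂.A x₂ + P₂.G d₂) ∈ S) ∧
    P₁.C x₁ = P₂.C x₂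

/-- `S` is a simulation relation of `P₁` by `P₂`. -/
def IsSimRel (P₁ : DVSystem X₁ W D₁ Y₁) (P₂ : DVSystem X₂ W D₂ Y₂)
    (S : Submodule ℝ (X₁ × X₂)) : Prop :=
  S.map (LinearMap.fst ℝ X₁ X₂) ≤ P₁.V ∧ S.map (LinearMap.snd ℝ X₁ X₂) ≤ P₂.V ∧
    SimConds P₁ P₂ S

/-- `S` is a full simulation relation of `P₁` by `P₂`: in addition `π₁(S) = V₁*`. -/
def IsFullSimRel (P₁ : DVSystem X₁ W D₁ Y₁) (P₂ : DVSystem X₂ W D₂ Y₂)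
    (S : Submodule ℝ (X₁ × X₂)) : Prop :=
  IsSimRel P₁ P₂ S ∧ S.map (LinearMap.fst ℝ X₁ X₂) = P₁.V

/-- `P₁ ≼ P₂`: `P₁` is simulated by `P₂`. -/
def Simulates (P₁ : DVSystem X₁ W D₁ Y₁) (P₂ : DVSystem X₂ W D₂ Y₂) : Prop :=
  ∃ S : Submodule ℝ (X₁ × X₂), IsFullSimRel P₁ P₂ S

/-- The composition `P₁ ∘ P₂` obtained by sharing the external variable `w₁ = w₂`. -/
noncomputable def comp (P₁ : DVSystem X₁ W D₁ Y₁) (P₂ : DVSystem X₂ W D₂ Y₂) :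
    DVSystem (X₁ × X₂) W (D₁ × D₂) (Y₁ × Y₂ × W) where
  A := P₁.A.prodMap P₂.A
  G := P₁.G.prodMap P₂.G
  C := (1/2 : ℝ) • (P₁.C ∘ₗ LinearMap.fst ℝ X₁ X₂ + P₂.C ∘ₗ LinearMap.snd ℝ X₁ X₂)
  H := (P₁.H ∘ₗ LinearMap.fst ℝ X₁ X₂).prod
    ((P₂.H ∘ₗ LinearMap.snd ℝ X₁ X₂).prod
      (P₁.C ∘ₗ LinearMap.fst ℝ X₁ X₂ - P₂.C ∘ₗ LinearMap.snd ℝ X₁ X₂))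

end sim

section relcomp

variable {X₁ X₂ X₃ : Type} [AddCommGroup X₁] [Module ℝ X₁]
  [AddCommGroup X₂] [Module ℝ X₂] [AddCommGroup X₃] [Module ℝ X₃]

/-- Composition of linear relations:
`{(x₁, x₃) | ∃ x₂, (x₁, x₂) ∈ S₁₂ ∧ (x₂, x₃) ∈ S₂₃}`. -/
def relComp (S₁₂ : Submodule ℝ (X₁ × X₂)) (S₂₃ : Submodule ℝ (X₂ × X₃)) :
    Submodule ℝ (X₁ × X₃) where
  carrier := {p | ∃ x₂, (p.1, x₂) ∈ S₁₂ ∧ (x₂, p.2) ∈ S₂₃}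
  zero_mem' := ⟨0, S₁₂.zero_mem, S₂₃.zero_mem⟩
  add_mem' := by
    rintro a b ⟨y, hy1, hy2⟩ ⟨z, hz1, hz2⟩
    exact ⟨y + z, S₁₂.add_mem hy1 hz1, S₂₃.add_mem hy2 hz2⟩
  smul_mem' := by
    rintro c a ⟨y, h1, h2⟩
    exact ⟨c • y, S₁₂.smul_mem c h1, S₂₃.smul_mem c h2⟩

/-- The pairing `{(x, (x₁, x₂)) | (x, x₁) ∈ S₁ ∧ (x, x₂) ∈ S₂}` of two relations. -/
def pairRel (S₁ : Submodule ℝ (X₁ × X₂)) (S₂ : Submodule ℝ (X₁ × X₃)) :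
    Submodule ℝ (X₁ × X₂ × X₃) where
  carrier := {p | (p.1, p.2.1) ∈ S₁ ∧ (p.1, p.2.2) ∈ S₂}
  zero_mem' := ⟨S₁.zero_mem, S₂.zero_mem⟩
  add_mem' := by
    rintro a b ⟨ha1, ha2⟩ ⟨hb1, hb2⟩
    exact ⟨S₁.add_mem ha1 hb1, S₂.add_mem ha2 hb2⟩
  smul_mem' := by
    rintro c a ⟨h1, h2⟩
    exact ⟨S₁.smul_mem c h1, S₂.smul_mem c h2⟩

end relcomp

section contract

variable {W : Type} [AddCommGroup W] [Module ℝ W]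
variable {X D Y Xa Da Ya Xg Dg Yg : Type}
  [AddCommGroup X] [Module ℝ X] [AddCommGroup D] [Module ℝ D]
  [AddCommGroup Y] [Module ℝ Y]
  [AddCommGroup Xa] [Module ℝ Xa] [AddCommGroup Da] [Module ℝ Da]
  [AddCommGroup Ya] [Module ℝ Ya]
  [AddCommGroup Xg] [Module ℝ Xg] [AddCommGroup Dg] [Module ℝ Dg]
  [AddCommGroup Yg] [Module ℝ Yg]

/-- `Sys` implements the contract `(Ass, Gar)` if `E ∘ Sys ≼ Gar` for every
compatible environment `E`, i.e., every environment with `E ≼ Ass`. -/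
def Implements (Sys : DVSystem X W D Y)
    (Ass : DVSystem Xa W Da Ya) (Gar : DVSystem Xg W Dg Yg) : Prop :=
  ∀ (Xe De Ye : Type) [AddCommGroup Xe] [Module ℝ Xe] [FiniteDimensional ℝ Xe]
    [AddCommGroup De] [Module ℝ De] [FiniteDimensional ℝ De]
    [AddCommGroup Ye] [Module ℝ Ye] [FiniteDimensional ℝ Ye]
    (E : DVSystem Xe W De Ye),
    Simulates E Ass → Simulates (comp E Sys) Gar

end contract

section refine

variable {W : Type} [AddCommGroup W] [Module ℝ W]
variable {Xa Da Ya Xg Dg Yg Xa' Da' Ya' Xg' Dg' Yg' : Type}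
  [AddCommGroup Xa] [Module ℝ Xa] [AddCommGroup Da] [Module ℝ Da]
  [AddCommGroup Ya] [Module ℝ Ya]
  [AddCommGroup Xg] [Module ℝ Xg] [AddCommGroup Dg] [Module ℝ Dg]
  [AddCommGroup Yg] [Module ℝ Yg]
  [AddCommGroup Xa'] [Module ℝ Xa'] [AddCommGroup Da'] [Module ℝ Da']
  [AddCommGroup Ya'] [Module ℝ Ya']
  [AddCommGroup Xg'] [Module ℝ Xg'] [AddCommGroup Dg'] [Module ℝ Dg']
  [AddCommGroup Yg'] [Module ℝ Yg']

/-- The contract `(Ass', Gar')` refines the contract `(Ass, Gar)`: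
`Ass ≼ Ass'` and `Ass ∘ Gar' ≼ Gar`. -/
def Refines (Ass' : DVSystem Xa' W Da' Ya') (Gar' : DVSystem Xg' W Dg' Yg')
    (Ass : DVSystem Xa W Da Ya) (Gar : DVSystem Xg W Dg Yg) : Prop :=
  Simulates Ass Ass' ∧ Simulates (comp Ass Gar') Gar

end refine

end DVSystem

open DVSystem

/-!
The relation is the graph of `(x₁, x₂) ↦ x₁` on `V∘,*`. Projecting the admissibility conditions
of `V∘,*` to the first factor shows that its image under `π_{X₁}` is admissible for `Σ₁`, hence
lies in `V₁*`; so `Σ₁` can follow any admissible step `(x, d)` of the composition with the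
driving variable `d.1`. Outputs agree because `H∘ x = 0` forces `C₁ x₁ = C₂ x₂`, so that
`C∘ x = C₁ x₁`.
-/

namespace Submodule

variable {R M N : Type*} [Semiring R] [AddCommMonoid M] [Module R M]
  [AddCommMonoid N] [Module R N]

theorem mem_map_id_prod_iff {U : Submodule R M} {f : M →ₗ[R] N} {x : M} {y : N} :
    (x, y) ∈ U.map (LinearMap.id.prod f) ↔ x ∈ U ∧ y = f x := by
  constructor
  · rintro ⟨u, hu, huxy⟩
    obtain ⟨rfl, rfl⟩ := Prod.ext_iff.1 huxy
    exact ⟨hu, rfl⟩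
  · rintro ⟨hx, rfl⟩
    exact ⟨x, hx, rfl⟩

theorem map_fst_map_id_prod (U : Submodule R M) (f : M →ₗ[R] N) :
    (U.map (LinearMap.id.prod f)).map (LinearMap.fst R M N) = U := by
  rw [← map_comp, LinearMap.fst_prod, map_id]

theorem map_snd_map_id_prod (U : Submodule R M) (f : M →ₗ[R] N) :
    (U.map (LinearMap.id.prod f)).map (LinearMap.snd R M N) = U.map f := by
  rw [← map_comp, LinearMap.snd_prod]

end Submodule

namespace DVSystem

section consistent

variable {X W D Y : Type}
  [AddCommGroup X] [Module ℝ X] [AddCommGroup W] [Module ℝ W]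
  [AddCommGroup D] [Module ℝ D] [AddCommGroup Y] [Module ℝ Y]
  (P : DVSystem X W D Y)

theorem Admissible.le_V {U : Submodule ℝ X} (hU : P.Admissible U) : U ≤ P.V :=
  le_sSup hU

theorem admissible_V : P.Admissible P.V :=
  ⟨Submodule.map_le_iff_le_comap.2 <| sSup_le fun _ hU =>
      Submodule.map_le_iff_le_comap.1 (hU.1.trans (sup_le_sup_right (hU.le_V P) _)),
    sSup_le fun _ hU => hU.2⟩

theorem H_eq_zero_of_mem_V {x : X} (hx : x ∈ P.V) : P.H x = 0 :=
  P.admissible_V.2 hx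

end consistent

section comp

variable {W : Type} [AddCommGroup W] [Module ℝ W]
  {X₁ D₁ Y₁ : Type} [AddCommGroup X₁] [Module ℝ X₁]
  [AddCommGroup D₁] [Module ℝ D₁] [AddCommGroup Y₁] [Module ℝ Y₁]
  {X₂ D₂ Y₂ : Type} [AddCommGroup X₂] [Module ℝ X₂]
  [AddCommGroup D₂] [Module ℝ D₂] [AddCommGroup Y₂] [Module ℝ Y₂]
  (P₁ : DVSystem X₁ W D₁ Y₁) (P₂ : DVSystem X₂ W D₂ Y₂)

theorem comp_H_eq_zero_iff {x : X₁ × X₂} :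
    (comp P₁ P₂).H x = 0 ↔ P₁.H x.1 = 0 ∧ P₂.H x.2 = 0 ∧ P₁.C x.1 = P₂.C x.2 := by
  simp [comp, sub_eq_zero]

theorem comp_C_eq_of_C_eq {x : X₁ × X₂} (hC : P₁.C x.1 = P₂.C x.2) :
    (comp P₁ P₂).C x = P₁.C x.1 := by
  simp only [comp, one_div, LinearMap.smul_apply, LinearMap.add_apply,
    LinearMap.comp_apply, LinearMap.fst_apply, LinearMap.snd_apply, ← hC, ← two_smul ℝ,
    smul_smul]
  norm_num

theorem C_fst_eq_C_snd_of_mem_comp_V {x : X₁ × X₂} (hx : x ∈ (comp P₁ P₂).V) :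
    P₁.C x.1 = P₂.C x.2 :=
  ((comp_H_eq_zero_iff P₁ P₂).1 ((comp P₁ P₂).H_eq_zero_of_mem_V hx)).2.2

theorem Admissible.map_fst_of_comp {U : Submodule ℝ (X₁ × X₂)}
    (hU : (comp P₁ P₂).Admissible U) : P₁.Admissible (U.map (LinearMap.fst ℝ X₁ X₂)) := by
  constructor
  · rintro _ ⟨_, ⟨x, hx, rfl⟩, rfl⟩
    obtain ⟨u, hu, _, ⟨d, rfl⟩, hud⟩ :=
      Submodule.mem_sup.1 (hU.1 (Submodule.mem_map_of_mem hx))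
    exact Submodule.mem_sup.2
      ⟨u.1, Submodule.mem_map_of_mem hu, P₁.G d.1, ⟨d.1, rfl⟩, congrArg Prod.fst hud⟩
  · rintro _ ⟨x, hx, rfl⟩
    exact ((comp_H_eq_zero_iff P₁ P₂).1 (hU.2 hx)).1

theorem map_fst_comp_V_le : (comp P₁ P₂).V.map (LinearMap.fst ℝ X₁ X₂) ≤ P₁.V :=
  ((comp P₁ P₂).admissible_V.map_fst_of_comp P₁ P₂).le_V P₁

theorem fst_mem_V_of_mem_comp_V {x : X₁ × X₂} (hx : x ∈ (comp P₁ P₂).V) : x.1 ∈ P₁.V :=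
  map_fst_comp_V_le P₁ P₂ (Submodule.mem_map_of_mem hx)

theorem simConds_comp_fst :
    SimConds (comp P₁ P₂) P₁
      ((comp P₁ P₂).V.map (LinearMap.id.prod (LinearMap.fst ℝ X₁ X₂))) := by
  intro x x₁ hxx₁
  obtain ⟨hx, rfl⟩ := Submodule.mem_map_id_prod_iff.1 hxx₁
  refine ⟨fun d hd => ⟨d.1, ?_, ?_⟩,
    comp_C_eq_of_C_eq P₁ P₂ (C_fst_eq_C_snd_of_mem_comp_V P₁ P₂ hx)⟩
  · exact fst_mem_V_of_mem_comp_V P₁ P₂ hd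
  · exact Submodule.mem_map_id_prod_iff.2 ⟨hd, rfl⟩

end comp

end DVSystem

theorem comp_fullSimRel_fst_general {W : Type} [AddCommGroup W] [Module ℝ W]
    {X₁ D₁ Y₁ : Type} [AddCommGroup X₁] [Module ℝ X₁]
    [AddCommGroup D₁] [Module ℝ D₁]
    [AddCommGroup Y₁] [Module ℝ Y₁]
    {X₂ D₂ Y₂ : Type} [AddCommGroup X₂] [Module ℝ X₂]
    [AddCommGroup D₂] [Module ℝ D₂]
    [AddCommGroup Y₂] [Module ℝ Y₂]
    (P₁ : DVSystem X₁ W D₁ Y₁) (P₂ : DVSystem X₂ W D₂ Y₂) :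
    IsFullSimRel (comp P₁ P₂) P₁
      (((comp P₁ P₂).V).map
        ((LinearMap.id : X₁ × X₂ →ₗ[ℝ] X₁ × X₂).prod (LinearMap.fst ℝ X₁ X₂))) := by
  have hfst := Submodule.map_fst_map_id_prod (comp P₁ P₂).V (LinearMap.fst ℝ X₁ X₂)
  have hsnd := Submodule.map_snd_map_id_prod (comp P₁ P₂).V (LinearMap.fst ℝ X₁ X₂)
  exact ⟨⟨hfst.le, hsnd ▸ map_fst_comp_V_le P₁ P₂, simConds_comp_fst P₁ P₂⟩, hfst⟩

/-- The subspace `{((x₁∘, x₂∘), x₁) | x₁∘ = x₁, (x₁∘, x₂∘) ∈ V∘,*}` is a full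
simulation relation of `Σ₁ ∘ Σ₂` by `Σ₁`. -/
theorem comp_fullSimRel_fst {W : Type} [AddCommGroup W] [Module ℝ W] [FiniteDimensional ℝ W]
    {X₁ D₁ Y₁ : Type} [AddCommGroup X₁] [Module ℝ X₁] [FiniteDimensional ℝ X₁]
    [AddCommGroup D₁] [Module ℝ D₁] [FiniteDimensional ℝ D₁]
    [AddCommGroup Y₁] [Module ℝ Y₁] [FiniteDimensional ℝ Y₁]
    {X₂ D₂ Y₂ : Type} [AddCommGroup X₂] [Module ℝ X₂] [FiniteDimensional ℝ X₂]
    [AddCommGroup D₂] [Module ℝ D₂] [FiniteDimensional ℝ D₂]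
    [AddCommGroup Y₂] [Module ℝ Y₂] [FiniteDimensional ℝ Y₂]
    (P₁ : DVSystem X₁ W D₁ Y₁) (P₂ : DVSystem X₂ W D₂ Y₂) :
    IsFullSimRel (comp P₁ P₂) P₁
      (((comp P₁ P₂).V).map
        ((LinearMap.id : X₁ × X₂ →ₗ[ℝ] X₁ × X₂).prod (LinearMap.fst ℝ X₁ X₂))) :=
  comp_fullSimRel_fst_general P₁ P₂
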